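/- Let φ_t be the Riccati semigroup with parameters (A, R, S) and φ̄_t the Riccati semigroup with parameters (A, R̄, S̄), where R ≥ R̄ > 0 and S̄ ≥ S > 0. Let λ = 2√(A² + RS), λ̄ = 2√(A² + R̄S̄), ϖ = 1 − ϖ₊/ϖ₋, ϖ̄ = 1 − ϖ̄₊/ϖ̄₋, and φ⋆(x) = max(x, ϖ₊). Then for all x ≥ 0 and t ≥ 0: 0 ≤ φ_t(x) − φ̄_t(x) ≤ 2(λ + λ̄)^{−1} ϖ̄ ϖ ((R − R̄) + (S̄ − S)φ⋆(x)²). -/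

import Mathlib

/-!
Write `F y = 2 A y + R - S y²`, `F̄` likewise, and `D = (R - R̄) + (S̄ - S) φ⋆(x)²`.
Along `σ ↦ φ_σ (φ̄_{t-σ} x)`, which runs from `φ̄_t x` to `φ_t x`, the derivative is
`∂ₓφ_σ · (F - F̄)` evaluated at `φ̄_{t-σ} x ∈ [0, φ⋆(x)]`, where `0 ≤ F - F̄ ≤ D`. As
`0 ≤ ∂ₓφ_σ(y) ≤ ∂ₓφ_σ(0) = ∂_σ φ_σ(0) / F(0)` for `y ≥ 0` and `φ_σ(0) ≤ ϖ₊`, integrating gives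
`0 ≤ φ_t x - φ̄_t x ≤ D ϖ₊ / F(0) = D / (λ/2 - A)`. Exchanging the two flows gives the bound
`D / (λ̄/2 - A)` as well, and since `ϖ = λ / (λ/2 - A)` with `0 < λ/2 - A < λ`, the smaller of the
two bounds is at most the stated one: the harmonic mean of `λ` and `λ̄` exceeds their minimum.
-/

noncomputable def lam (A R S : ℝ) : ℝ := 2 * Real.sqrt (A ^ 2 + R * S)

noncomputable def wplus (A R S : ℝ) : ℝ := (A + lam A R S / 2) / S

noncomputable def wminus (A R S : ℝ) : ℝ := (A - lam A R S / 2) / S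

/-- The closed-form Riccati semigroup `φ_t(x)`. -/
noncomputable def phi (A R S t x : ℝ) : ℝ :=
  wplus A R S +
    (x - wplus A R S) * ((wplus A R S - wminus A R S) * Real.exp (-(lam A R S) * t)) /
      ((wplus A R S - wminus A R S) * Real.exp (-(lam A R S) * t) +
        (x - wminus A R S) * (1 - Real.exp (-(lam A R S) * t)))

/-- `ϖ = 1 - ϖ₊/ϖ₋`. -/
noncomputable def vpi (A R S : ℝ) : ℝ := 1 - wplus A R S / wminus A R S

open Real Set

noncomputable def riccatiField (S p m y : ℝ) : ℝ := S * (p - y) * (y - m)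

noncomputable def riccatiDenom (S p m t x : ℝ) : ℝ :=
  (p - m) * exp (-(S * (p - m)) * t) + (x - m) * (1 - exp (-(S * (p - m)) * t))

/-- The solution of `y' = S (p - y) (y - m)`, `y(0) = x`. -/
noncomputable def riccatiFlow (S p m t x : ℝ) : ℝ :=
  p + (x - p) * ((p - m) * exp (-(S * (p - m)) * t)) / riccatiDenom S p m t x

/-- `∂ₓ riccatiFlow S p m t x`. -/
noncomputable def riccatiFlowSlope (S p m t x : ℝ) : ℝ :=
  (p - m) ^ 2 * exp (-(S * (p - m)) * t) / riccatiDenom S p m t x ^ 2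

theorem exp_neg_mul_le_one {a t : ℝ} (ha : 0 ≤ a) (ht : 0 ≤ t) : exp (-a * t) ≤ 1 :=
  exp_le_one_iff.2 <| mul_nonpos_of_nonpos_of_nonneg (neg_nonpos.2 ha) ht

theorem sub_le_sub_of_hasDerivAt_le {f g f' g' : ℝ → ℝ} {a b : ℝ} (hab : a ≤ b)
    (hf : ∀ x ∈ Icc a b, HasDerivAt f (f' x) x) (hg : ∀ x ∈ Icc a b, HasDerivAt g (g' x) x)
    (h : ∀ x ∈ Icc a b, f' x ≤ g' x) : f b - f a ≤ g b - g a := by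
  have key := image_le_of_deriv_right_le_deriv_boundary (a := a) (b := b) (f := f)
    (B := fun x => g x + (f a - g a))
    (fun x hx => (hf x hx).continuousAt.continuousWithinAt)
    (fun x hx => (hf x (Ico_subset_Icc_self hx)).hasDerivWithinAt) (by simp)
    (fun x hx => ((hg x hx).continuousAt.add continuousAt_const).continuousWithinAt)
    (fun x hx => ((hg x (Ico_subset_Icc_self hx)).add_const _).hasDerivWithinAt)
    (fun x hx => h x (Ico_subset_Icc_self hx)) (right_mem_Icc.2 hab)
  linarith

section RiccatiFlow

variable {S p m t x : ℝ}

theorem riccatiFlow_time_zero (h : p ≠ m) : riccatiFlow S p m 0 x = x := by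
  have : p - m ≠ 0 := sub_ne_zero.2 h
  simp only [riccatiFlow, riccatiDenom, mul_zero, exp_zero, sub_self, add_zero, mul_one]
  field_simp
  ring

theorem riccatiDenom_zero_le (hS : 0 ≤ S) (hmp : m ≤ p) (ht : 0 ≤ t) (hx : 0 ≤ x) :
    riccatiDenom S p m t 0 ≤ riccatiDenom S p m t x := by
  have := exp_neg_mul_le_one (mul_nonneg hS (sub_nonneg.2 hmp)) ht
  simp only [riccatiDenom]
  nlinarith

theorem riccatiDenom_zero_pos (hp : 0 < p) (hm : m < 0) : 0 < riccatiDenom S p m t 0 := by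
  have := exp_pos (-(S * (p - m)) * t)
  simp only [riccatiDenom]
  nlinarith

theorem riccatiDenom_pos (hS : 0 ≤ S) (hp : 0 < p) (hm : m < 0) (ht : 0 ≤ t) (hx : 0 ≤ x) :
    0 < riccatiDenom S p m t x :=
  (riccatiDenom_zero_pos hp hm).trans_le (riccatiDenom_zero_le hS (by linarith) ht hx)

theorem riccatiFlow_eq_div (hD : riccatiDenom S p m t x ≠ 0) :
    riccatiFlow S p m t x = (x * (p - m * exp (-(S * (p - m)) * t)) -
      p * m * (1 - exp (-(S * (p - m)) * t))) / riccatiDenom S p m t x := by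
  rw [riccatiFlow, eq_div_iff hD, add_mul, div_mul_cancel₀ _ hD, riccatiDenom]
  ring

theorem riccatiFlow_nonneg (hS : 0 ≤ S) (hp : 0 < p) (hm : m < 0) (ht : 0 ≤ t) (hx : 0 ≤ x) :
    0 ≤ riccatiFlow S p m t x := by
  have hD := riccatiDenom_pos hS hp hm ht hx
  have he := exp_pos (-(S * (p - m)) * t)
  have he1 := exp_neg_mul_le_one (mul_nonneg hS (by linarith : 0 ≤ p - m)) ht
  rw [riccatiFlow_eq_div hD.ne']
  apply div_nonneg _ hD.le
  nlinarith [mul_nonneg hx (by nlinarith : 0 ≤ p - m * exp (-(S * (p - m)) * t)),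
    mul_nonneg (mul_pos hp (neg_pos.2 hm)).le (sub_nonneg.2 he1)]

theorem riccatiFlow_le_max (hS : 0 ≤ S) (hp : 0 < p) (hm : m < 0) (ht : 0 ≤ t) (hx : 0 ≤ x) :
    riccatiFlow S p m t x ≤ max x p := by
  have hD := riccatiDenom_pos hS hp hm ht hx
  have he := exp_pos (-(S * (p - m)) * t)
  have he1 := exp_neg_mul_le_one (mul_nonneg hS (by linarith : 0 ≤ p - m)) ht
  rcases le_total x p with hxp | hpx
  · refine le_max_of_le_right (add_le_of_nonpos_right (div_nonpos_of_nonpos_of_nonneg ?_ hD.le))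
    exact mul_nonpos_of_nonpos_of_nonneg (by linarith) (mul_nonneg (by linarith) he.le)
  · refine le_max_of_le_left ?_
    rw [riccatiFlow_eq_div hD.ne', div_le_iff₀ hD, riccatiDenom]
    nlinarith [mul_nonneg (mul_nonneg (sub_nonneg.2 he1) (sub_nonneg.2 hpx))
      (by linarith : 0 ≤ x - m)]

theorem riccatiFlowSlope_nonneg : 0 ≤ riccatiFlowSlope S p m t x := by
  unfold riccatiFlowSlope; positivity

theorem riccatiFlowSlope_le_riccatiFlowSlope_zero (hS : 0 ≤ S) (hp : 0 < p) (hm : m < 0)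
    (ht : 0 ≤ t) (hx : 0 ≤ x) : riccatiFlowSlope S p m t x ≤ riccatiFlowSlope S p m t 0 := by
  unfold riccatiFlowSlope
  have h0 := riccatiDenom_zero_pos (S := S) (t := t) hp hm
  gcongr
  exact riccatiDenom_zero_le hS (by linarith) ht hx

theorem hasDerivAt_riccatiFlow_comp {ψ : ℝ → ℝ} {w s : ℝ} (hψ : HasDerivAt ψ w s)
    (hD : riccatiDenom S p m s (ψ s) ≠ 0) :
    HasDerivAt (fun σ => riccatiFlow S p m σ (ψ σ))
      (riccatiFlowSlope S p m s (ψ s) * (riccatiField S p m (ψ s) + w)) s := by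
  have hE : HasDerivAt (fun σ => exp (-(S * (p - m)) * σ))
      (exp (-(S * (p - m)) * s) * -(S * (p - m))) s := by
    simpa using ((hasDerivAt_id s).const_mul (-(S * (p - m)))).exp
  have hnum : HasDerivAt (fun σ => (ψ σ - p) * ((p - m) * exp (-(S * (p - m)) * σ)))
      (w * ((p - m) * exp (-(S * (p - m)) * s)) +
        (ψ s - p) * ((p - m) * (exp (-(S * (p - m)) * s) * -(S * (p - m))))) s :=
    (hψ.sub_const p).mul (hE.const_mul (p - m))
  have hden : HasDerivAt (fun σ => riccatiDenom S p m σ (ψ σ))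
      ((p - m) * (exp (-(S * (p - m)) * s) * -(S * (p - m))) +
        (w * (1 - exp (-(S * (p - m)) * s)) +
          (ψ s - m) * (0 - exp (-(S * (p - m)) * s) * -(S * (p - m))))) s :=
    (hE.const_mul (p - m)).add ((hψ.sub_const m).mul ((hasDerivAt_const s 1).sub hE))
  refine ((hnum.div hden hD).const_add p).congr_deriv ?_
  simp only [riccatiFlowSlope, riccatiField, riccatiDenom] at hD ⊢
  generalize exp (-(S * (p - m)) * s) = E at hD ⊢
  field_simp
  ring

theorem riccatiField_riccatiFlow (hD : riccatiDenom S p m t x ≠ 0) :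
    riccatiField S p m (riccatiFlow S p m t x) =
      riccatiFlowSlope S p m t x * riccatiField S p m x := by
  simp only [riccatiFlow, riccatiFlowSlope, riccatiField, riccatiDenom] at hD ⊢
  generalize exp (-(S * (p - m)) * t) = E at hD ⊢
  field_simp
  ring

theorem hasDerivAt_riccatiFlow (hD : riccatiDenom S p m t x ≠ 0) :
    HasDerivAt (fun t => riccatiFlow S p m t x)
      (riccatiField S p m (riccatiFlow S p m t x)) t := by
  rw [riccatiField_riccatiFlow hD]
  simpa using hasDerivAt_riccatiFlow_comp (hasDerivAt_const t x) hD

theorem sub_le_of_deriv_le_riccatiFlowSlope {f f' : ℝ → ℝ} {C : ℝ} (hS : 0 < S) (hp : 0 < p)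
    (hm : m < 0) (ht : 0 ≤ t) (hC : 0 ≤ C) (hf : ∀ σ ∈ Icc 0 t, HasDerivAt f (f' σ) σ)
    (hf' : ∀ σ ∈ Icc 0 t, f' σ ≤ C * riccatiFlowSlope S p m σ 0) :
    f t - f 0 ≤ C / (S * -m) := by
  have hF0 : 0 < S * p * -m := by have := neg_pos.2 hm; positivity
  -- `S * p * -m = riccatiField S p m 0`, so the flow started at `0` integrates the slope bound
  have hg : ∀ σ, HasDerivAt (fun σ => C / (S * p * -m) * riccatiFlow S p m σ 0)
      (C * riccatiFlowSlope S p m σ 0) σ := fun σ => by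
    refine ((hasDerivAt_riccatiFlow_comp (hasDerivAt_const σ (0 : ℝ))
      (riccatiDenom_zero_pos hp hm).ne').const_mul (C / (S * p * -m))).congr_deriv ?_
    rw [riccatiField, sub_zero, zero_sub, add_zero, mul_comm (riccatiFlowSlope S p m σ 0),
      ← mul_assoc, div_mul_cancel₀ _ hF0.ne']
  have hφp : riccatiFlow S p m t 0 ≤ p :=
    (riccatiFlow_le_max hS.le hp hm ht le_rfl).trans (max_le hp.le le_rfl)
  calc f t - f 0
      ≤ C / (S * p * -m) * riccatiFlow S p m t 0 - C / (S * p * -m) * riccatiFlow S p m 0 0 :=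
        sub_le_sub_of_hasDerivAt_le ht hf (fun σ _ => hg σ) hf'
    _ ≤ C / (S * p * -m) * p := by
        rw [riccatiFlow_time_zero (by linarith), mul_zero, sub_zero]
        exact mul_le_mul_of_nonneg_left hφp (by positivity)
    _ = C / (S * -m) := by field_simp

end RiccatiFlow

theorem riccatiFlow_sub_mem_Icc {S₁ p₁ m₁ S₂ p₂ m₂ t x B C₁ C₂ : ℝ}
    (hS₁ : 0 < S₁) (hp₁ : 0 < p₁) (hm₁ : m₁ < 0) (hS₂ : 0 ≤ S₂) (hp₂ : 0 < p₂) (hm₂ : m₂ < 0)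
    (ht : 0 ≤ t) (hx : 0 ≤ x) (hxB : x ≤ B) (hpB : p₂ ≤ B) (hC₁ : 0 ≤ C₁) (hC₂ : 0 ≤ C₂)
    (hF : ∀ y ∈ Icc 0 B, riccatiField S₁ p₁ m₁ y - riccatiField S₂ p₂ m₂ y ∈ Icc (-C₂) C₁) :
    riccatiFlow S₁ p₁ m₁ t x - riccatiFlow S₂ p₂ m₂ t x ∈
      Icc (-(C₂ / (S₁ * -m₁))) (C₁ / (S₁ * -m₁)) := by
  -- interpolate between the two flows: `σ ↦ φ₁_σ (φ₂_{t-σ} x)` runs from `φ₂_t x` to `φ₁_t x`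
  set ψ : ℝ → ℝ := fun σ => riccatiFlow S₂ p₂ m₂ (t - σ) x
  set Δ : ℝ → ℝ := fun y => riccatiField S₁ p₁ m₁ y - riccatiField S₂ p₂ m₂ y
  have hψ_mem : ∀ σ ∈ Icc 0 t, ψ σ ∈ Icc 0 B := fun σ hσ =>
    ⟨riccatiFlow_nonneg hS₂ hp₂ hm₂ (sub_nonneg.2 hσ.2) hx,
      (riccatiFlow_le_max hS₂ hp₂ hm₂ (sub_nonneg.2 hσ.2) hx).trans (max_le hxB hpB)⟩
  have hK : ∀ σ ∈ Icc 0 t, HasDerivAt (fun σ => riccatiFlow S₁ p₁ m₁ σ (ψ σ))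
      (riccatiFlowSlope S₁ p₁ m₁ σ (ψ σ) * Δ (ψ σ)) σ := by
    intro σ hσ
    have hψ' : HasDerivAt ψ (-riccatiField S₂ p₂ m₂ (ψ σ)) σ :=
      (hasDerivAt_riccatiFlow (riccatiDenom_pos hS₂ hp₂ hm₂ (sub_nonneg.2 hσ.2)
        hx).ne').comp_const_sub t σ
    simpa [← sub_eq_add_neg] using hasDerivAt_riccatiFlow_comp hψ'
      (riccatiDenom_pos hS₁.le hp₁ hm₁ hσ.1 (hψ_mem σ hσ).1).ne'
  have hK0 : riccatiFlow S₁ p₁ m₁ 0 (ψ 0) = riccatiFlow S₂ p₂ m₂ t x := by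
    simp only [ψ, sub_zero, riccatiFlow_time_zero (hm₁.trans hp₁).ne']
  have hKt : riccatiFlow S₁ p₁ m₁ t (ψ t) = riccatiFlow S₁ p₁ m₁ t x := by
    simp only [ψ, sub_self, riccatiFlow_time_zero (hm₂.trans hp₂).ne']
  have hslope : ∀ σ ∈ Icc 0 t, riccatiFlowSlope S₁ p₁ m₁ σ (ψ σ) ≤ riccatiFlowSlope S₁ p₁ m₁ σ 0 :=
    fun σ hσ => riccatiFlowSlope_le_riccatiFlowSlope_zero hS₁.le hp₁ hm₁ hσ.1 (hψ_mem σ hσ).1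
  rw [← hK0, ← hKt]
  constructor
  · have := sub_le_of_deriv_le_riccatiFlowSlope hS₁ hp₁ hm₁ ht hC₂ (fun σ hσ => (hK σ hσ).fun_neg)
      fun σ hσ => calc
        -(riccatiFlowSlope S₁ p₁ m₁ σ (ψ σ) * Δ (ψ σ))
          = riccatiFlowSlope S₁ p₁ m₁ σ (ψ σ) * -Δ (ψ σ) := by ring
        _ ≤ riccatiFlowSlope S₁ p₁ m₁ σ (ψ σ) * C₂ :=
          mul_le_mul_of_nonneg_left (neg_le.1 (hF _ (hψ_mem σ hσ)).1) riccatiFlowSlope_nonneg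
        _ ≤ C₂ * riccatiFlowSlope S₁ p₁ m₁ σ 0 := by
          rw [mul_comm]; exact mul_le_mul_of_nonneg_left (hslope σ hσ) hC₂
    linarith
  · refine sub_le_of_deriv_le_riccatiFlowSlope hS₁ hp₁ hm₁ ht hC₁ hK fun σ hσ => ?_
    calc riccatiFlowSlope S₁ p₁ m₁ σ (ψ σ) * Δ (ψ σ)
        ≤ riccatiFlowSlope S₁ p₁ m₁ σ (ψ σ) * C₁ :=
          mul_le_mul_of_nonneg_left (hF _ (hψ_mem σ hσ)).2 riccatiFlowSlope_nonneg
      _ ≤ C₁ * riccatiFlowSlope S₁ p₁ m₁ σ 0 := by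
          rw [mul_comm]; exact mul_le_mul_of_nonneg_left (hslope σ hσ) hC₁

section Parameters

variable {A R S : ℝ}

theorem abs_lt_lam_div_two (h : 0 < R * S) : |A| < lam A R S / 2 := by
  rw [lam, mul_div_cancel_left₀ _ two_ne_zero, ← sqrt_sq_eq_abs]
  exact sqrt_lt_sqrt (sq_nonneg A) (by linarith)

theorem wplus_pos (hR : 0 < R) (hS : 0 < S) : 0 < wplus A R S :=
  div_pos (by linarith [neg_abs_le A, abs_lt_lam_div_two (A := A) (mul_pos hR hS)]) hS

theorem wminus_neg (hR : 0 < R) (hS : 0 < S) : wminus A R S < 0 :=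
  div_neg_of_neg_of_pos
    (by linarith [le_abs_self A, abs_lt_lam_div_two (A := A) (mul_pos hR hS)]) hS

theorem lam_eq_mul_wplus_sub_wminus (hS : S ≠ 0) :
    lam A R S = S * (wplus A R S - wminus A R S) := by
  rw [wplus, wminus]
  field_simp
  ring

theorem mul_neg_wminus (hS : S ≠ 0) : S * -wminus A R S = lam A R S / 2 - A := by
  rw [wminus]
  field_simp
  ring

theorem phi_eq_riccatiFlow (hS : S ≠ 0) (t x : ℝ) :
    phi A R S t x = riccatiFlow S (wplus A R S) (wminus A R S) t x := by
  rw [phi, lam_eq_mul_wplus_sub_wminus hS]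
  rfl

theorem riccatiField_eq (hS : S ≠ 0) (h : 0 ≤ A ^ 2 + R * S) (y : ℝ) :
    riccatiField S (wplus A R S) (wminus A R S) y = 2 * A * y + R - S * y ^ 2 := by
  have hlam : lam A R S ^ 2 = 4 * (A ^ 2 + R * S) := by
    rw [lam, mul_pow, sq_sqrt h]; norm_num
  rw [riccatiField, wplus, wminus]
  field_simp
  linear_combination hlam

theorem vpi_eq (hR : 0 < R) (hS : 0 < S) : vpi A R S = lam A R S / (lam A R S / 2 - A) := by
  rw [vpi, ← mul_neg_wminus hS.ne', lam_eq_mul_wplus_sub_wminus hS.ne']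
  have := (wminus_neg (A := A) hR hS).ne
  field_simp
  ring

theorem wplus_le_wplus {Rb Sb : ℝ} (hRb : 0 < Rb) (hS : 0 < S) (hR : Rb ≤ R) (hSb : S ≤ Sb) :
    wplus A Rb Sb ≤ wplus A R S := by
  have hR0 := hRb.trans_le hR
  have hSb0 := hS.trans_le hSb
  set pb := wplus A Rb Sb
  have hpb := wplus_pos (A := A) hRb hSb0
  -- `pb` is a zero of `2 A y + Rb - Sb y²`, which lies below `2 A y + R - S y²`
  have hF : 0 ≤ S * (wplus A R S - pb) * (pb - wminus A R S) := by
    have h0 := riccatiField_eq (A := A) hSb0.ne' (by positivity) pb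
    rw [riccatiField, sub_self, mul_zero, zero_mul] at h0
    rw [← riccatiField, riccatiField_eq hS.ne' (by positivity)]
    nlinarith [mul_le_mul_of_nonneg_right hSb (sq_nonneg pb)]
  have hpm : 0 < S * (pb - wminus A R S) := mul_pos hS (by linarith [wminus_neg (A := A) hR0 hS])
  rw [mul_right_comm] at hF
  linarith [nonneg_of_mul_nonneg_right hF hpm]

end Parameters

-- `2 c d / (c + d)`, the harmonic mean of `c` and `d`, dominates `min c d ≥ min a b`
theorem le_harmonic_mean_mul {u D a b c d : ℝ} (hD : 0 ≤ D) (ha : 0 < a) (hb : 0 < b)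
    (hac : a ≤ c) (hbd : b ≤ d) (hua : u ≤ D / a) (hub : u ≤ D / b) :
    u ≤ 2 * (c + d)⁻¹ * (d / b) * (c / a) * D := by
  have hc := ha.trans_le hac
  have hd := hb.trans_le hbd
  have key : 2 * (c + d)⁻¹ * (d / b) * (c / a) * D = D / (a * b) * (2 * c * d / (c + d)) := by
    field_simp
  have hDab : 0 ≤ D / (a * b) := by positivity
  rw [key]
  rcases le_total a b with hab | hab
  · calc u ≤ D / b := hub
      _ = D / (a * b) * a := by field_simp
      _ ≤ D / (a * b) * (2 * c * d / (c + d)) := by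
        gcongr
        rw [le_div_iff₀ (by positivity)]
        nlinarith
  · calc u ≤ D / a := hua
      _ = D / (a * b) * b := by field_simp
      _ ≤ D / (a * b) * (2 * c * d / (c + d)) := by
        gcongr
        rw [le_div_iff₀ (by positivity)]
        nlinarith

theorem riccati_semigroup_comparison (A R S Rb Sb : ℝ)
    (hRb : 0 < Rb) (hS : 0 < S) (hR : Rb ≤ R) (hSb : S ≤ Sb)
    (x t : ℝ) (hx : 0 ≤ x) (ht : 0 ≤ t) :
    0 ≤ phi A R S t x - phi A Rb Sb t x ∧
      phi A R S t x - phi A Rb Sb t x ≤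
        2 * (lam A R S + lam A Rb Sb)⁻¹ * vpi A Rb Sb * vpi A R S *
          ((R - Rb) + (Sb - S) * (max x (wplus A R S)) ^ 2) := by
  have hR0 := hRb.trans_le hR
  have hSb0 := hS.trans_le hSb
  set B := max x (wplus A R S)
  set D := (R - Rb) + (Sb - S) * B ^ 2
  have hD : 0 ≤ D := by have := sq_nonneg B; nlinarith
  have hΔ : ∀ y ∈ Icc 0 B, riccatiField S (wplus A R S) (wminus A R S) y -
      riccatiField Sb (wplus A Rb Sb) (wminus A Rb Sb) y ∈ Icc 0 D := fun y hy => by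
    rw [riccatiField_eq hS.ne' (by positivity), riccatiField_eq hSb0.ne' (by positivity)]
    have := pow_le_pow_left₀ hy.1 hy.2 2
    constructor <;> nlinarith [sq_nonneg y]
  have h₁ := riccatiFlow_sub_mem_Icc hS (wplus_pos hR0 hS) (wminus_neg hR0 hS) hSb0.le
    (wplus_pos hRb hSb0) (wminus_neg hRb hSb0) ht hx (le_max_left _ _)
    ((wplus_le_wplus hRb hS hR hSb).trans (le_max_right _ _)) hD le_rfl
    fun y hy => by simpa using hΔ y hy
  have h₂ := riccatiFlow_sub_mem_Icc hSb0 (wplus_pos hRb hSb0) (wminus_neg hRb hSb0) hS.le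
    (wplus_pos hR0 hS) (wminus_neg hR0 hS) ht hx (le_max_left _ _) (le_max_right _ _) le_rfl hD
    fun y hy => by
      have := hΔ y hy
      constructor <;> linarith [this.1, this.2]
  rw [mul_neg_wminus hS.ne'] at h₁
  rw [mul_neg_wminus hSb0.ne'] at h₂
  rw [phi_eq_riccatiFlow hS.ne', phi_eq_riccatiFlow hSb0.ne', vpi_eq hRb hSb0, vpi_eq hR0 hS]
  obtain ⟨hA₁, hA₂⟩ := abs_lt.1 (abs_lt_lam_div_two (A := A) (mul_pos hR0 hS))
  obtain ⟨hAb₁, hAb₂⟩ := abs_lt.1 (abs_lt_lam_div_two (A := A) (mul_pos hRb hSb0))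
  refine ⟨by simpa using h₁.1, le_harmonic_mean_mul hD (by linarith) (by linarith) (by linarith)
    (by linarith) h₁.2 (by linarith [h₂.1])⟩
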